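/- Let u have continuous partial derivatives up to order 2 on T. Then for every τ ∈ Q_k(T): (Q₀u, Δτ)_T − ⟨Q_b u, ∇τ·𝐧⟩_{∂T} + ⟨𝐐_g(∇u)·𝐧, τ⟩_{∂T} = (Q₀(Δu), τ)_T. (Equivalently, the discrete weak Laplacian of the projected triple (Q₀u, Q_b u, 𝐐_g(∇u)) equals Q₀(Δu).) -/

import Mathlib

/-!
Since `Q_k(T)` is stable under `∂₁` and `∂₂`, it contains `Δτ`, and the traces of `τ`, `∂₁τ`
and `∂₂τ` on each edge lie in `P_k(e)`. Hence every projection in the identity may be replaced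
by the function it projects, and what remains is Green's second identity
`(u, Δτ)_T - (Δu, τ)_T = ⟨u, ∇τ·𝐧⟩_{∂T} - ⟨∇u·𝐧, τ⟩_{∂T}` on the rectangle. It follows from
`∫ (f g'' - f'' g) = [f g' - f' g]` in one variable, applied along each coordinate after Fubini.
-/

open MeasureTheory Real

noncomputable section

/-- `Q_k`: real polynomials in two variables of degree at most `k` in each variable. -/
def IsQk (k : ℕ) (v : ℝ → ℝ → ℝ) : Prop :=
  ∃ p : MvPolynomial (Fin 2) ℝ, (∀ i, p.degreeOf i ≤ k) ∧
    ∀ x y : ℝ, v x y = MvPolynomial.eval ![x, y] p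

/-- `P_k`: real polynomials in one variable of degree at most `k`. -/
def IsPk (k : ℕ) (f : ℝ → ℝ) : Prop :=
  ∃ p : Polynomial ℝ, p.natDegree ≤ k ∧ ∀ x : ℝ, f x = p.eval x

/-- Partial derivative in the first variable. -/
def pd1 (w : ℝ → ℝ → ℝ) : ℝ → ℝ → ℝ := fun x y => deriv (fun t => w t y) x

/-- Partial derivative in the second variable. -/
def pd2 (w : ℝ → ℝ → ℝ) : ℝ → ℝ → ℝ := fun x y => deriv (fun t => w x t) y

/-- Laplacian. -/
def lapl (w : ℝ → ℝ → ℝ) : ℝ → ℝ → ℝ :=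
  fun x y => pd1 (pd1 w) x y + pd2 (pd2 w) x y

/-- L² inner product over the rectangle `[x0,x1] × [y0,y1]`. -/
def ipT (x0 x1 y0 y1 : ℝ) (f g : ℝ → ℝ → ℝ) : ℝ :=
  ∫ x in x0..x1, ∫ y in y0..y1, f x y * g x y

/-- Squared L² norm over the rectangle `[x0,x1] × [y0,y1]`. -/
def normSqT (x0 x1 y0 y1 : ℝ) (w : ℝ → ℝ → ℝ) : ℝ := ipT x0 x1 y0 y1 w w

/-- Squared L² norm over the two edges parallel to the x-axis (`∂T₁`). -/
def normSqE1 (x0 x1 y0 y1 : ℝ) (w : ℝ → ℝ → ℝ) : ℝ :=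
  ∫ x in x0..x1, ((w x y0) ^ 2 + (w x y1) ^ 2)

/-- Squared L² norm over the two edges parallel to the y-axis (`∂T₂`). -/
def normSqE2 (x0 x1 y0 y1 : ℝ) (w : ℝ → ℝ → ℝ) : ℝ :=
  ∫ y in y0..y1, ((w x0 y) ^ 2 + (w x1 y) ^ 2)

/-- `P` is the L²(T)-orthogonal projection of `φ` onto `Q_k(T)`. -/
def IsProjT (k : ℕ) (x0 x1 y0 y1 : ℝ) (φ P : ℝ → ℝ → ℝ) : Prop :=
  IsQk k P ∧ ∀ q : ℝ → ℝ → ℝ, IsQk k q →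
    ipT x0 x1 y0 y1 (fun x y => φ x y - P x y) q = 0

/-- `g` is the L²(e)-orthogonal projection of `f` onto `P_k(e)`, for an edge
parametrized by `[a,b]`. -/
def IsProjE (k : ℕ) (a b : ℝ) (f g : ℝ → ℝ) : Prop :=
  IsPk k g ∧ ∀ q : ℝ → ℝ, IsPk k q → (∫ x in a..b, (f x - g x) * q x) = 0

open Function

namespace MvPolynomial

variable {R σ : Type*} [CommSemiring R]

theorem degreeOf_pderiv_le (i j : σ) (p : MvPolynomial σ R) :
    degreeOf i (pderiv j p) ≤ degreeOf i p := by
  classical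
  refine degreeOf_le_iff.mpr fun m hm => ?_
  rw [mem_support_iff, coeff_pderiv] at hm
  have hle := monomial_le_degreeOf i (mem_support_iff.mpr (left_ne_zero_of_mul hm))
  simp only [Finsupp.coe_add, Pi.add_apply] at hle
  omega

theorem hasDerivAt_eval_vecCons (p : MvPolynomial (Fin 2) ℝ) (x y : ℝ) :
    HasDerivAt (fun t => eval ![t, y] p) (eval ![x, y] (pderiv 0 p)) x := by
  induction p using MvPolynomial.induction_on with
  | C a => simpa using hasDerivAt_const x a
  | add p q hp hq => simpa using hp.fun_add hq
  | mul_X p i hp =>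
    fin_cases i
    · simpa [pderiv_mul, mul_comm, add_comm] using hp.fun_mul (hasDerivAt_id' x)
    · simpa [pderiv_mul, mul_comm] using hp.mul_const y

theorem contDiff_eval_vecCons (p : MvPolynomial (Fin 2) ℝ) {n : WithTop ℕ∞} :
    ContDiff ℝ n (fun z : ℝ × ℝ => eval ![z.1, z.2] p) := by
  induction p using MvPolynomial.induction_on with
  | C a => simpa using contDiff_const
  | add p q hp hq => simpa using hp.add hq
  | mul_X p i hp =>
    fin_cases i
    · simpa using hp.mul contDiff_fst
    · simpa using hp.mul contDiff_snd

end MvPolynomial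

namespace IsQk

variable {k : ℕ} {v w : ℝ → ℝ → ℝ}

theorem flip (h : IsQk k v) : IsQk k (_root_.flip v) := by
  obtain ⟨p, hdeg, hv⟩ := h
  refine ⟨MvPolynomial.rename (Equiv.swap 0 1) p, fun i => ?_, fun x y => ?_⟩
  · rw [← Equiv.swap_apply_self 0 1 i,
      MvPolynomial.degreeOf_rename_of_injective (Equiv.injective _)]
    exact hdeg _
  · rw [MvPolynomial.eval_rename, show _root_.flip v x y = v y x from rfl, hv]
    congr 2
    funext i
    fin_cases i <;> rfl

theorem add (hv : IsQk k v) (hw : IsQk k w) : IsQk k (fun x y => v x y + w x y) := by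
  obtain ⟨p, hp, hpv⟩ := hv
  obtain ⟨q, hq, hqw⟩ := hw
  exact ⟨p + q, fun i => (MvPolynomial.degreeOf_add_le i p q).trans (max_le (hp i) (hq i)),
    fun x y => by simp [hpv, hqw]⟩

theorem pd1 (h : IsQk k v) : IsQk k (pd1 v) := by
  obtain ⟨p, hdeg, hv⟩ := h
  refine ⟨MvPolynomial.pderiv 0 p,
    fun i => (MvPolynomial.degreeOf_pderiv_le i 0 p).trans (hdeg i), fun x y => ?_⟩
  simp only [_root_.pd1, hv]
  exact (MvPolynomial.hasDerivAt_eval_vecCons p x y).deriv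

-- `pd2 v` is definitionally `flip (pd1 (flip v))`; this is how `y`-statements follow from `x`-ones.
theorem pd2 (h : IsQk k v) : IsQk k (pd2 v) :=
  h.flip.pd1.flip

theorem contDiff (h : IsQk k v) {n : WithTop ℕ∞} : ContDiff ℝ n (uncurry v) := by
  obtain ⟨p, -, hv⟩ := h
  simpa only [uncurry_def, hv] using MvPolynomial.contDiff_eval_vecCons p

theorem continuous (h : IsQk k v) : Continuous (uncurry v) :=
  (h.contDiff (n := 0)).continuous

theorem isPk_left (h : IsQk k v) (y : ℝ) : IsPk k (fun x => v x y) := by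
  obtain ⟨p, hdeg, hv⟩ := h
  refine ⟨∑ d ∈ p.support, Polynomial.C (p.coeff d * y ^ d 1) * Polynomial.X ^ d 0,
    Polynomial.natDegree_sum_le_of_forall_le _ _ fun d hd => ?_, fun x => ?_⟩
  · exact (Polynomial.natDegree_C_mul_X_pow_le _ _).trans
      ((MvPolynomial.monomial_le_degreeOf 0 hd).trans (hdeg 0))
  · simp only [hv, MvPolynomial.eval_eq', Fin.prod_univ_two, Polynomial.eval_finsetSum]
    refine Finset.sum_congr rfl fun d _ => ?_
    simp only [Matrix.cons_val_zero, Matrix.cons_val_one, Polynomial.eval_mul, Polynomial.eval_C,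
      Polynomial.eval_pow, Polynomial.eval_X]
    ring

theorem isPk_right (h : IsQk k v) (x : ℝ) : IsPk k (fun y => v x y) :=
  h.flip.isPk_left x

end IsQk

theorem IsPk.continuous {k : ℕ} {f : ℝ → ℝ} (h : IsPk k f) : Continuous f := by
  obtain ⟨p, -, hp⟩ := h
  simpa only [← funext hp] using p.continuous

section IteratedIntegral

variable {F G : ℝ → ℝ → ℝ} (a b c d : ℝ)

theorem intervalIntegral_intervalIntegral_add (hF : Continuous (uncurry F))
    (hG : Continuous (uncurry G)) :
    ∫ x in a..b, ∫ y in c..d, (F x y + G x y)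
      = (∫ x in a..b, ∫ y in c..d, F x y) + ∫ x in a..b, ∫ y in c..d, G x y := by
  rw [← intervalIntegral.integral_add
    (intervalIntegral.continuous_parametric_intervalIntegral_of_continuous' hF c d
      |>.intervalIntegrable a b)
    (intervalIntegral.continuous_parametric_intervalIntegral_of_continuous' hG c d
      |>.intervalIntegrable a b)]
  exact intervalIntegral.integral_congr fun x _ => intervalIntegral.integral_add
    ((hF.uncurry_left x).intervalIntegrable _ _) ((hG.uncurry_left x).intervalIntegrable _ _)

theorem intervalIntegral_intervalIntegral_sub (hF : Continuous (uncurry F))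
    (hG : Continuous (uncurry G)) :
    ∫ x in a..b, ∫ y in c..d, (F x y - G x y)
      = (∫ x in a..b, ∫ y in c..d, F x y) - ∫ x in a..b, ∫ y in c..d, G x y := by
  rw [← intervalIntegral.integral_sub
    (intervalIntegral.continuous_parametric_intervalIntegral_of_continuous' hF c d
      |>.intervalIntegrable a b)
    (intervalIntegral.continuous_parametric_intervalIntegral_of_continuous' hG c d
      |>.intervalIntegrable a b)]
  exact intervalIntegral.integral_congr fun x _ => intervalIntegral.integral_sub
    ((hF.uncurry_left x).intervalIntegrable _ _) ((hG.uncurry_left x).intervalIntegrable _ _)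

theorem intervalIntegral_intervalIntegral_swap_of_continuous (hF : Continuous (uncurry F)) :
    ∫ x in a..b, ∫ y in c..d, F x y = ∫ y in c..d, ∫ x in a..b, F x y := by
  refine intervalIntegral_intervalIntegral_swap ?_
  exact (hF.continuousOn.integrableOn_compact (isCompact_uIcc.prod isCompact_uIcc)).mono_set
    (Set.prod_mono Set.uIoc_subset_uIcc Set.uIoc_subset_uIcc)

end IteratedIntegral

section Partial

variable {f : ℝ → ℝ → ℝ}

theorem pd2_eq_fderiv (hf : Differentiable ℝ (uncurry f)) (x y : ℝ) :
    pd2 f x y = fderiv ℝ (uncurry f) (x, y) (0, 1) :=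
  ((hf (x, y)).hasFDerivAt.comp_hasDerivAt y
    ((hasDerivAt_const y x).prodMk (hasDerivAt_id y))).deriv

theorem contDiff_uncurry_pd2 {m n : WithTop ℕ∞} (hf : ContDiff ℝ n (uncurry f))
    (hmn : m + 1 ≤ n) :
    ContDiff ℝ m (uncurry (pd2 f)) := by
  have hdiff : Differentiable ℝ (uncurry f) :=
    hf.differentiable (one_pos.trans_le (le_add_self.trans hmn)).ne'
  simpa only [uncurry_def, pd2_eq_fderiv hdiff] using
    (hf.fderiv_right hmn).clm_apply contDiff_const

theorem contDiff_uncurry_flip {n : WithTop ℕ∞} (hf : ContDiff ℝ n (uncurry f)) :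
    ContDiff ℝ n (uncurry (flip f)) :=
  hf.comp (contDiff_snd.prodMk contDiff_fst)

theorem contDiff_uncurry_pd1 {m n : WithTop ℕ∞} (hf : ContDiff ℝ n (uncurry f))
    (hmn : m + 1 ≤ n) :
    ContDiff ℝ m (uncurry (pd1 f)) :=
  contDiff_uncurry_flip (contDiff_uncurry_pd2 (contDiff_uncurry_flip hf) hmn)

end Partial

theorem integral_mul_deriv_deriv_sub_deriv_deriv_mul {f g : ℝ → ℝ} (hf : ContDiff ℝ 2 f)
    (hg : ContDiff ℝ 2 g) (a b : ℝ) :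
    ∫ x in a..b, (f x * deriv (deriv g) x - deriv (deriv f) x * g x)
      = (f b * deriv g b - deriv f b * g b) - (f a * deriv g a - deriv f a * g a) := by
  have hf' : ContDiff ℝ 1 (deriv f) := hf.deriv'
  have hg' : ContDiff ℝ 1 (deriv g) := hg.deriv'
  refine intervalIntegral.integral_eq_sub_of_hasDerivAt
    (f := fun x => f x * deriv g x - deriv f x * g x) (fun x _ => ?_)
    (((hf.continuous.mul (hg'.continuous_deriv le_rfl)).sub
      ((hf'.continuous_deriv le_rfl).mul hg.continuous)).intervalIntegrable _ _)
  have hdf := (hf.differentiable two_ne_zero x).hasDerivAt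
  have hdg := (hg.differentiable two_ne_zero x).hasDerivAt
  have hddf := (hf'.differentiable one_ne_zero x).hasDerivAt
  have hddg := (hg'.differentiable one_ne_zero x).hasDerivAt
  convert (hdf.fun_mul hddg).fun_sub (hddf.fun_mul hdg) using 1
  ring

section Green

variable {f g : ℝ → ℝ → ℝ}

theorem continuous_uncurry_pd2_pd2 (hf : ContDiff ℝ 2 (uncurry f)) :
    Continuous (uncurry (pd2 (pd2 f))) :=
  (contDiff_uncurry_pd2 (m := 0) (contDiff_uncurry_pd2 (m := 1) hf le_rfl) le_rfl).continuous

theorem continuous_uncurry_pd1_pd1 (hf : ContDiff ℝ 2 (uncurry f)) :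
    Continuous (uncurry (pd1 (pd1 f))) :=
  (contDiff_uncurry_pd1 (m := 0) (contDiff_uncurry_pd1 (m := 1) hf le_rfl) le_rfl).continuous

theorem ipT_pd2_pd2_sub (hf : ContDiff ℝ 2 (uncurry f)) (hg : ContDiff ℝ 2 (uncurry g))
    (x0 x1 y0 y1 : ℝ) :
    ipT x0 x1 y0 y1 f (pd2 (pd2 g)) - ipT x0 x1 y0 y1 (pd2 (pd2 f)) g
      = ((∫ x in x0..x1, f x y1 * pd2 g x y1) - ∫ x in x0..x1, pd2 f x y1 * g x y1)
        - ((∫ x in x0..x1, f x y0 * pd2 g x y0) - ∫ x in x0..x1, pd2 f x y0 * g x y0) := by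
  have hf1 := (contDiff_uncurry_pd2 (m := 1) hf le_rfl).continuous
  have hg1 := (contDiff_uncurry_pd2 (m := 1) hg le_rfl).continuous
  have hfg' : ∀ y, IntervalIntegrable (fun x => f x y * pd2 g x y) volume x0 x1 := fun y =>
    ((hf.continuous.uncurry_right y).mul (hg1.uncurry_right y)).intervalIntegrable _ _
  have hf'g : ∀ y, IntervalIntegrable (fun x => pd2 f x y * g x y) volume x0 x1 := fun y =>
    ((hf1.uncurry_right y).mul (hg.continuous.uncurry_right y)).intervalIntegrable _ _
  have hsect : ∀ {h : ℝ → ℝ → ℝ}, ContDiff ℝ 2 (uncurry h) → ∀ x, ContDiff ℝ 2 (h x) :=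
    fun hh x => hh.comp (contDiff_const.prodMk contDiff_id)
  have hline : ∀ x, ∫ y in y0..y1, (f x y * pd2 (pd2 g) x y - pd2 (pd2 f) x y * g x y)
      = (f x y1 * pd2 g x y1 - pd2 f x y1 * g x y1)
        - (f x y0 * pd2 g x y0 - pd2 f x y0 * g x y0) := fun x =>
    integral_mul_deriv_deriv_sub_deriv_deriv_mul (hsect hf x) (hsect hg x) y0 y1
  rw [ipT, ipT, ← intervalIntegral_intervalIntegral_sub,
    intervalIntegral.integral_congr fun x _ => hline x,
    intervalIntegral.integral_sub ((hfg' y1).sub (hf'g y1)) ((hfg' y0).sub (hf'g y0)),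
    intervalIntegral.integral_sub (hfg' y1) (hf'g y1),
    intervalIntegral.integral_sub (hfg' y0) (hf'g y0)]
  · exact hf.continuous.mul (continuous_uncurry_pd2_pd2 hg)
  · exact (continuous_uncurry_pd2_pd2 hf).mul hg.continuous

theorem ipT_flip (hf : Continuous (uncurry f)) (hg : Continuous (uncurry g)) (x0 x1 y0 y1 : ℝ) :
    ipT x0 x1 y0 y1 f g = ipT y0 y1 x0 x1 (flip f) (flip g) :=
  intervalIntegral_intervalIntegral_swap_of_continuous _ _ _ _ (hf.mul hg)

theorem ipT_pd1_pd1_sub (hf : ContDiff ℝ 2 (uncurry f)) (hg : ContDiff ℝ 2 (uncurry g))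
    (x0 x1 y0 y1 : ℝ) :
    ipT x0 x1 y0 y1 f (pd1 (pd1 g)) - ipT x0 x1 y0 y1 (pd1 (pd1 f)) g
      = ((∫ y in y0..y1, f x1 y * pd1 g x1 y) - ∫ y in y0..y1, pd1 f x1 y * g x1 y)
        - ((∫ y in y0..y1, f x0 y * pd1 g x0 y) - ∫ y in y0..y1, pd1 f x0 y * g x0 y) := by
  rw [ipT_flip hf.continuous (continuous_uncurry_pd1_pd1 hg),
    ipT_flip (continuous_uncurry_pd1_pd1 hf) hg.continuous]
  exact ipT_pd2_pd2_sub (contDiff_uncurry_flip hf) (contDiff_uncurry_flip hg) y0 y1 x0 x1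

theorem ipT_lapl_sub (hf : ContDiff ℝ 2 (uncurry f)) (hg : ContDiff ℝ 2 (uncurry g))
    (x0 x1 y0 y1 : ℝ) :
    ipT x0 x1 y0 y1 f (lapl g) - ipT x0 x1 y0 y1 (lapl f) g
      = ((∫ y in y0..y1, f x1 y * pd1 g x1 y) - ∫ y in y0..y1, pd1 f x1 y * g x1 y)
        - ((∫ y in y0..y1, f x0 y * pd1 g x0 y) - ∫ y in y0..y1, pd1 f x0 y * g x0 y)
        + ((∫ x in x0..x1, f x y1 * pd2 g x y1) - ∫ x in x0..x1, pd2 f x y1 * g x y1)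
        - ((∫ x in x0..x1, f x y0 * pd2 g x y0) - ∫ x in x0..x1, pd2 f x y0 * g x y0) := by
  have hleft : ipT x0 x1 y0 y1 f (lapl g)
      = ipT x0 x1 y0 y1 f (pd1 (pd1 g)) + ipT x0 x1 y0 y1 f (pd2 (pd2 g)) := by
    simp only [ipT, lapl, mul_add]
    rw [intervalIntegral_intervalIntegral_add]
    · exact hf.continuous.mul (continuous_uncurry_pd1_pd1 hg)
    · exact hf.continuous.mul (continuous_uncurry_pd2_pd2 hg)
  have hright : ipT x0 x1 y0 y1 (lapl f) g
      = ipT x0 x1 y0 y1 (pd1 (pd1 f)) g + ipT x0 x1 y0 y1 (pd2 (pd2 f)) g := by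
    simp only [ipT, lapl, add_mul]
    rw [intervalIntegral_intervalIntegral_add]
    · exact (continuous_uncurry_pd1_pd1 hf).mul hg.continuous
    · exact (continuous_uncurry_pd2_pd2 hf).mul hg.continuous
  rw [hleft, hright]
  linarith [ipT_pd1_pd1_sub hf hg x0 x1 y0 y1, ipT_pd2_pd2_sub hf hg x0 x1 y0 y1]

end Green

theorem IsProjT.ipT_eq {k : ℕ} {x0 x1 y0 y1 : ℝ} {φ P q : ℝ → ℝ → ℝ}
    (hP : IsProjT k x0 x1 y0 y1 φ P) (hφ : Continuous (uncurry φ)) (hq : IsQk k q) :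
    ipT x0 x1 y0 y1 P q = ipT x0 x1 y0 y1 φ q := by
  have horth := hP.2 q hq
  simp only [ipT, sub_mul] at horth
  rw [intervalIntegral_intervalIntegral_sub, sub_eq_zero] at horth
  · exact horth.symm
  · exact hφ.mul hq.continuous
  · exact hP.1.continuous.mul hq.continuous

theorem IsProjE.integral_mul_eq {k : ℕ} {a b : ℝ} {f g q : ℝ → ℝ} (h : IsProjE k a b f g)
    (hf : IntervalIntegrable f volume a b) (hq : IsPk k q) :
    ∫ x in a..b, g x * q x = ∫ x in a..b, f x * q x := by
  have horth := h.2 q hq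
  simp only [sub_mul] at horth
  rw [intervalIntegral.integral_sub (hf.mul_continuousOn hq.continuous.continuousOn)
    ((h.1.continuous.intervalIntegrable a b).mul_continuousOn hq.continuous.continuousOn),
    sub_eq_zero] at horth
  exact horth.symm

theorem statement5_general (k : ℕ) (x0 x1 y0 y1 : ℝ)
    (u : ℝ → ℝ → ℝ) (hu : ContDiff ℝ 2 (fun p : ℝ × ℝ => u p.1 p.2))
    (P0u P0Lu : ℝ → ℝ → ℝ)
    (hP0u : IsProjT k x0 x1 y0 y1 u P0u)
    (hP0Lu : IsProjT k x0 x1 y0 y1 (lapl u) P0Lu)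
    (qbB qbT qbL qbR g2B g2T g1L g1R : ℝ → ℝ)
    (hqbB : IsProjE k x0 x1 (fun x => u x y0) qbB)
    (hqbT : IsProjE k x0 x1 (fun x => u x y1) qbT)
    (hqbL : IsProjE k y0 y1 (fun y => u x0 y) qbL)
    (hqbR : IsProjE k y0 y1 (fun y => u x1 y) qbR)
    (hg2B : IsProjE k x0 x1 (fun x => pd2 u x y0) g2B)
    (hg2T : IsProjE k x0 x1 (fun x => pd2 u x y1) g2T)
    (hg1L : IsProjE k y0 y1 (fun y => pd1 u x0 y) g1L)
    (hg1R : IsProjE k y0 y1 (fun y => pd1 u x1 y) g1R)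
    (τ : ℝ → ℝ → ℝ) (hτ : IsQk k τ) :
    ipT x0 x1 y0 y1 P0u (lapl τ)
      - ((∫ x in x0..x1, qbB x * (-(pd2 τ x y0)))
        + (∫ x in x0..x1, qbT x * pd2 τ x y1)
        + (∫ y in y0..y1, qbL y * (-(pd1 τ x0 y)))
        + (∫ y in y0..y1, qbR y * pd1 τ x1 y))
      + ((∫ x in x0..x1, (-(g2B x)) * τ x y0)
        + (∫ x in x0..x1, g2T x * τ x y1)
        + (∫ y in y0..y1, (-(g1L y)) * τ x0 y)
        + (∫ y in y0..y1, g1R y * τ x1 y))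
    = ipT x0 x1 y0 y1 P0Lu τ := by
  have hu' : ContDiff ℝ 2 (uncurry u) := hu
  have hu0 := hu'.continuous
  have hu1 := (contDiff_uncurry_pd1 (m := 1) hu' le_rfl).continuous
  have hu2 := (contDiff_uncurry_pd2 (m := 1) hu' le_rfl).continuous
  have hlapl_u : Continuous (uncurry (lapl u)) :=
    (continuous_uncurry_pd1_pd1 hu').add (continuous_uncurry_pd2_pd2 hu')
  have hlapl_τ : IsQk k (lapl τ) := hτ.pd1.pd1.add hτ.pd2.pd2
  rw [hP0u.ipT_eq hu0 hlapl_τ, hP0Lu.ipT_eq hlapl_u hτ]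
  simp only [mul_neg, neg_mul, intervalIntegral.integral_neg]
  rw [hqbB.integral_mul_eq ((hu0.uncurry_right y0).intervalIntegrable _ _) (hτ.pd2.isPk_left y0),
    hqbT.integral_mul_eq ((hu0.uncurry_right y1).intervalIntegrable _ _) (hτ.pd2.isPk_left y1),
    hqbL.integral_mul_eq ((hu0.uncurry_left x0).intervalIntegrable _ _) (hτ.pd1.isPk_right x0),
    hqbR.integral_mul_eq ((hu0.uncurry_left x1).intervalIntegrable _ _) (hτ.pd1.isPk_right x1),
    hg2B.integral_mul_eq ((hu2.uncurry_right y0).intervalIntegrable _ _) (hτ.isPk_left y0),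
    hg2T.integral_mul_eq ((hu2.uncurry_right y1).intervalIntegrable _ _) (hτ.isPk_left y1),
    hg1L.integral_mul_eq ((hu1.uncurry_left x0).intervalIntegrable _ _) (hτ.isPk_right x0),
    hg1R.integral_mul_eq ((hu1.uncurry_left x1).intervalIntegrable _ _) (hτ.isPk_right x1)]
  linarith [ipT_lapl_sub hu' hτ.contDiff x0 x1 y0 y1]

/-- the discrete weak Laplacian of the projected triple
`(Q₀u, Q_b u, 𝐐_g(∇u))` is `Q₀(Δu)`, expressed through the defining identity.
The rectangle is `T = [x0,x1] × [y0,y1]`; on each edge the outward normal is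
used (bottom `(0,-1)`, top `(0,1)`, left `(-1,0)`, right `(1,0)`). -/
theorem statement5 (k : ℕ) (hk : 3 ≤ k) (x0 x1 y0 y1 : ℝ) (hx : x0 < x1) (hy : y0 < y1)
    (u : ℝ → ℝ → ℝ) (hu : ContDiff ℝ 2 (fun p : ℝ × ℝ => u p.1 p.2))
    (P0u P0Lu : ℝ → ℝ → ℝ)
    (hP0u : IsProjT k x0 x1 y0 y1 u P0u)
    (hP0Lu : IsProjT k x0 x1 y0 y1 (lapl u) P0Lu)
    (qbB qbT qbL qbR g1B g2B g1T g2T g1L g2L g1R g2R : ℝ → ℝ)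
    (hqbB : IsProjE k x0 x1 (fun x => u x y0) qbB)
    (hqbT : IsProjE k x0 x1 (fun x => u x y1) qbT)
    (hqbL : IsProjE k y0 y1 (fun y => u x0 y) qbL)
    (hqbR : IsProjE k y0 y1 (fun y => u x1 y) qbR)
    (hg1B : IsProjE k x0 x1 (fun x => pd1 u x y0) g1B)
    (hg2B : IsProjE k x0 x1 (fun x => pd2 u x y0) g2B)
    (hg1T : IsProjE k x0 x1 (fun x => pd1 u x y1) g1T)
    (hg2T : IsProjE k x0 x1 (fun x => pd2 u x y1) g2T)
    (hg1L : IsProjE k y0 y1 (fun y => pd1 u x0 y) g1L)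
    (hg2L : IsProjE k y0 y1 (fun y => pd2 u x0 y) g2L)
    (hg1R : IsProjE k y0 y1 (fun y => pd1 u x1 y) g1R)
    (hg2R : IsProjE k y0 y1 (fun y => pd2 u x1 y) g2R)
    (τ : ℝ → ℝ → ℝ) (hτ : IsQk k τ) :
    ipT x0 x1 y0 y1 P0u (lapl τ)
      - ((∫ x in x0..x1, qbB x * (-(pd2 τ x y0)))
        + (∫ x in x0..x1, qbT x * pd2 τ x y1)
        + (∫ y in y0..y1, qbL y * (-(pd1 τ x0 y)))
        + (∫ y in y0..y1, qbR y * pd1 τ x1 y))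
      + ((∫ x in x0..x1, (-(g2B x)) * τ x y0)
        + (∫ x in x0..x1, g2T x * τ x y1)
        + (∫ y in y0..y1, (-(g1L y)) * τ x0 y)
        + (∫ y in y0..y1, g1R y * τ x1 y))
    = ipT x0 x1 y0 y1 P0Lu τ :=
  statement5_general k x0 x1 y0 y1 u hu P0u P0Lu hP0u hP0Lu qbB qbT qbL qbR g2B g2T g1L g1R hqbB
    hqbT hqbL hqbR hg2B hg2T hg1L hg1R τ hτ
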